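/- arXiv:2302.02072 — 2 statements merged into one kernel-verified Lean document; each statement's English description precedes it below -/
import Mathlib

section
/- Strong duality: assume (H0)–(H2), (A0), (A1), and that the augmenting function σ is conditionally coercive with σ(0)=0 and argmin σ = {0}. If there exists (ȳ,c̄) ∈ H × ℝ₊ with q(ȳ,c̄) > −∞, then the zero-duality-gap property holds: M_P = M_D, where M_P := inf_{x∈X} φ(x) and M_D := sup_{(y,c)∈H×ℝ₊} q(y,c). -/
open Filter Topology Bornology

noncomputable section

/-- A real normed space is *reflexive* if the canonical embedding into its double dual is
surjective. -/
def IsReflexiveSpace (X : Type*) [NormedAddCommGroup X] [NormedSpace ℝ X] : Prop :=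
  Function.Surjective ⇑(NormedSpace.inclusionInDoubleDual ℝ X)

/-- A set is *weakly compact* if it is compact in the weak topology. -/
def WCompact {X : Type*} [NormedAddCommGroup X] [NormedSpace ℝ X] (S : Set X) : Prop :=
  IsCompact (show Set (WeakSpace ℝ X) from S)

/-- A set is *weakly open* if it is open in the weak topology. -/
def WOpen {X : Type*} [NormedAddCommGroup X] [NormedSpace ℝ X] (S : Set X) : Prop :=
  IsOpen (show Set (WeakSpace ℝ X) from S)

/-- A set of pairs is *weakly compact* if it is compact in the product of the weak
topologies. -/
def WCompact2 {X H : Type*} [NormedAddCommGroup X] [NormedSpace ℝ X]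
    [NormedAddCommGroup H] [NormedSpace ℝ H] (S : Set (X × H)) : Prop :=
  IsCompact (show Set (WeakSpace ℝ X × WeakSpace ℝ H) from S)

/-- *Weak lower semicontinuity* of an extended-real-valued function. -/
def WLsc {X : Type*} [NormedAddCommGroup X] [NormedSpace ℝ X] (g : X → EReal) : Prop :=
  LowerSemicontinuous (show WeakSpace ℝ X → EReal from g)

/-- Weak lower semicontinuity of a function of two variables, w.r.t. the product of the
weak topologies. -/
def WLsc2 {X H : Type*} [NormedAddCommGroup X] [NormedSpace ℝ X]
    [NormedAddCommGroup H] [NormedSpace ℝ H] (g : X × H → EReal) : Prop :=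
  LowerSemicontinuous (show WeakSpace ℝ X × WeakSpace ℝ H → EReal from g)

/-- Weak upper semicontinuity of a real-valued function. -/
def WUsc {X : Type*} [NormedAddCommGroup X] [NormedSpace ℝ X] (g : X → ℝ) : Prop :=
  UpperSemicontinuous (show WeakSpace ℝ X → ℝ from g)

/-- Weak (sequential) convergence of a sequence: `L (u n) → L l` for every continuous
linear functional `L`. -/
def WSeqConv {X : Type*} [NormedAddCommGroup X] [NormedSpace ℝ X] (u : ℕ → X) (l : X) : Prop :=
  ∀ L : StrongDual ℝ X, Tendsto (fun n => L (u n)) atTop (𝓝 (L l))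

/-- Weak level-compactness of a dualizing parameterization `f`. -/
def WLevelCompact {X H : Type*} [NormedAddCommGroup X] [NormedSpace ℝ X]
    [NormedAddCommGroup H] [NormedSpace ℝ H] (f : X → H → EReal) : Prop :=
  ∀ (z₀ : H) (α : ℝ), ∃ U : Set H, WOpen U ∧ z₀ ∈ U ∧
    ∃ B : Set X, WCompact B ∧ ∀ z ∈ U, {x : X | f x z ≤ (α : EReal)} ⊆ B

section Lagrangian

variable {X H : Type*} [NormedAddCommGroup H] [InnerProductSpace ℝ H]

/-- The augmented Lagrangian integrand `(x,z) ↦ f(x,z) − ⟨A z, y⟩ + c σ(z)`. -/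
def lagr (f : X → H → EReal) (σ : H → EReal) (A : H → H) (y : H) (c : ℝ) (x : X) (z : H) :
    EReal :=
  f x z - ((inner ℝ (A z) y : ℝ) : EReal) + (c : EReal) * σ z

/-- The dual function `q(y,c) = inf_{x,z} (f(x,z) − ⟨A z, y⟩ + c σ(z))`. -/
def dualq (f : X → H → EReal) (σ : H → EReal) (A : H → H) (y : H) (c : ℝ) : EReal :=
  ⨅ (x : X) (z : H), lagr f σ A y c x z

/-- The dual optimal value `M_D = sup_{(y,c) ∈ H × ℝ₊} q(y,c)`. -/
def MD (f : X → H → EReal) (σ : H → EReal) (A : H → H) : EReal :=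
  ⨆ (y : H) (c : ℝ) (_ : 0 ≤ c), dualq f σ A y c

/-- `(y,c)` is a solution of the dual problem. -/
def DualSol (f : X → H → EReal) (σ : H → EReal) (A : H → H) (y : H) (c : ℝ) : Prop :=
  0 ≤ c ∧ ∀ (y' : H) (c' : ℝ), 0 ≤ c' → dualq f σ A y' c' ≤ dualq f σ A y c

/-- The function `γ_n(z) = β(z) − ⟨A z, ȳ⟩ + n σ(z)`, where `β(z) = inf_x f(x,z)`. -/
def gam (f : X → H → EReal) (σ : H → EReal) (A : H → H) (ybar : H) (n : ℕ) (z : H) : EReal :=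
  (⨅ x : X, f x z) - ((inner ℝ (A z) ybar : ℝ) : EReal) + (n : EReal) * σ z

end Lagrangian

/-- The primal optimal value `M_P = inf_x φ(x)`. -/
def MP {X : Type*} (φ : X → EReal) : EReal := ⨅ x, φ x

/-!
Weak duality holds because `z = 0` is admissible in every dual function. Conversely, if
`M_D < r < M_P`, then `q(ȳ, n+1) < r` yields points `(xₙ, zₙ)` with
`f(xₙ,zₙ) − ⟨A zₙ, ȳ⟩ + (n+1) σ(zₙ) < r`, while `q(ȳ, c̄) > m` bounds the same expression with
`c̄` in place of `n+1` from below; hence `(n+1−c̄) σ(zₙ) < r − m` and `σ(zₙ) → 0`. Conditional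
coercivity puts `zₙ` eventually in a ball, which is weakly compact, and weak lower
semicontinuity together with `argmin σ = {0}` forces `zₙ ⇀ 0`. By (A0),
`f(xₙ,zₙ) ≤ r + σ(zₙ) ‖ȳ‖`, so level-compactness of `f` near `z = 0` gives a weak cluster point
`x*` of `(xₙ)`, and weak lower semicontinuity of `f` gives `φ(x*) = f(x*,0) ≤ r < M_P`.
-/

theorem LowerSemicontinuous.le_of_mapClusterPt {Y ι β : Type*} [TopologicalSpace Y]
    [LinearOrder β] [DenselyOrdered β] [TopologicalSpace β] [OrderTopology β]
    {g : Y → β} (hg : LowerSemicontinuous g) {l : Filter ι} {u : ι → Y} {p : Y}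
    (hp : MapClusterPt p l u) {b : ι → β} {a : β} (hb : Tendsto b l (𝓝 a))
    (hgb : ∀ᶠ i in l, g (u i) ≤ b i) : g p ≤ a :=
  le_of_forall_gt_imp_ge_of_dense fun a' ha' =>
    (hg.isClosed_preimage a').mem_of_mapClusterPt hp <|
      (hgb.and (hb.eventually (gt_mem_nhds ha'))).mono fun _ h => h.1.trans h.2.le

theorem MapClusterPt.prodMk_of_tendsto {Y Z ι : Type*} [TopologicalSpace Y] [TopologicalSpace Z]
    {l : Filter ι} {u : ι → Y} {v : ι → Z} {y : Y} {z : Z}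
    (hu : MapClusterPt y l u) (hv : Tendsto v l (𝓝 z)) :
    MapClusterPt (y, z) l fun i => (u i, v i) := by
  rw [mapClusterPt_iff_frequently] at hu
  rw [((𝓝 y).basis_sets.prod_nhds (𝓝 z).basis_sets).mapClusterPt_iff_frequently]
  rintro ⟨s, t⟩ ⟨hs, ht⟩
  exact (hu s hs).and_eventually (hv ht)

theorem LowerSemicontinuous.tendsto_nhds_of_unique_le {Y ι β : Type*} [TopologicalSpace Y]
    [LinearOrder β] [DenselyOrdered β] [TopologicalSpace β] [OrderTopology β]
    {g : Y → β} (hg : LowerSemicontinuous g) {a : β} {p : Y} (hp : ∀ y, g y ≤ a → y = p)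
    {K : Set Y} (hK : IsCompact K) {l : Filter ι} {u : ι → Y} (huK : ∀ᶠ i in l, u i ∈ K)
    (hgu : Tendsto (fun i => g (u i)) l (𝓝 a)) : Tendsto u l (𝓝 p) :=
  hK.tendsto_nhds_of_unique_mapClusterPt huK fun y _ hy =>
    hp y (hg.le_of_mapClusterPt hy hgu (Eventually.of_forall fun _ => le_rfl))

theorem LowerSemicontinuous.exists_le_of_levelCompact {Y Z ι β : Type*} [TopologicalSpace Y]
    [TopologicalSpace Z] [LinearOrder β] [DenselyOrdered β] [TopologicalSpace β]
    [OrderTopology β] {g : Y × Z → β} (hg : LowerSemicontinuous g) {p : Z} {a α : β}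
    (hα : a < α) {U : Set Z} (hU : U ∈ 𝓝 p) {B : Set Y} (hB : IsCompact B)
    (hUB : ∀ z ∈ U, ∀ y, g (y, z) ≤ α → y ∈ B) {l : Filter ι} [l.NeBot] {u : ι → Y}
    {v : ι → Z} (hv : Tendsto v l (𝓝 p)) {b : ι → β} (hb : Tendsto b l (𝓝 a))
    (hgb : ∀ᶠ i in l, g (u i, v i) ≤ b i) : ∃ y, g (y, p) ≤ a := by
  have huB : ∀ᶠ i in l, u i ∈ B := by
    filter_upwards [hv hU, hb.eventually (gt_mem_nhds hα), hgb] with i hvi hbi hgi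
    exact hUB _ hvi _ (hgi.trans hbi.le)
  obtain ⟨y, -, hy⟩ := hB.exists_mapClusterPt (le_principal_iff.2 huB)
  exact ⟨y, hg.le_of_mapClusterPt (hy.prodMk_of_tendsto hv) hb hgb⟩

-- Riesz representation transports Banach–Alaoglu from the dual to `H`.
theorem wcompact_closedBall {H : Type*} [NormedAddCommGroup H] [InnerProductSpace ℝ H]
    [CompleteSpace H] (R : ℝ) : WCompact (Metric.closedBall (0 : H) R) := by
  set T := InnerProductSpace.toDual ℝ H
  let ψ : WeakDual ℝ H → WeakSpace ℝ H := fun g => toWeakSpace ℝ H (T.symm g)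
  have hψ : Continuous ψ := by
    refine WeakBilin.continuous_of_continuous_eval _ fun L => ?_
    have hsymm : ∀ g : WeakDual ℝ H, L (T.symm g) = g (T.symm L) := fun g => by
      rw [← T.apply_symm_apply L, InnerProductSpace.toDual_apply_apply, real_inner_comm,
        ← InnerProductSpace.toDual_apply_apply, T.symm_apply_apply]
      exact DFunLike.congr_fun (T.apply_symm_apply g) _
    show Continuous fun g : WeakDual ℝ H => L (T.symm g)
    simp_rw [hsymm]
    exact WeakDual.eval_continuous _
  have himage : ψ '' (WeakDual.toStrongDual ⁻¹' Metric.closedBall 0 R) =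
      Metric.closedBall (0 : H) R := by
    ext z
    simp only [ψ, Set.mem_image, Set.mem_preimage, mem_closedBall_zero_iff]
    constructor
    · rintro ⟨g, hg, rfl⟩
      exact (mem_closedBall_zero_iff (E := H)).2 ((T.symm.norm_map g).trans_le hg)
    · intro hz
      exact ⟨T z, (T.norm_map z).trans_le (mem_closedBall_zero_iff.1 hz), T.symm_apply_apply z⟩
  unfold WCompact
  rw [← himage]
  exact (WeakDual.isCompact_closedBall 0 R).image hψ

theorem tendsto_weakSpace_zero_of_tendsto_sigma {H ι : Type*} [NormedAddCommGroup H]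
    [InnerProductSpace ℝ H] [CompleteSpace H] {σ : H → EReal} (hσpos : ∀ z, 0 ≤ σ z)
    (hσargmin : ∀ z, σ z = 0 → z = 0) (hσwlsc : WLsc σ) {K : ℝ} (hK : 0 < K)
    (hσcc : IsBounded {z : H | σ z ≤ K}) {l : Filter ι} {z : ι → H}
    (hz : Tendsto (fun i => σ (z i)) l (𝓝 0)) :
    Tendsto (fun i => toWeakSpace ℝ H (z i)) l (𝓝 0) := by
  obtain ⟨R, hR⟩ := hσcc.subset_closedBall 0
  refine hσwlsc.tendsto_nhds_of_unique_le
    (fun w hw => hσargmin w (le_antisymm hw (hσpos w))) (wcompact_closedBall R) ?_ hz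
  filter_upwards [hz.eventually (gt_mem_nhds (EReal.coe_pos.2 hK))] with i hi
  exact hR (le_of_lt hi)

theorem tendsto_zero_of_penalty_le {s : ℕ → ℝ} {c d : ℝ} (hs : ∀ n, 0 ≤ s n)
    (h : ∀ n : ℕ, ((n : ℝ) + 1 - c) * s n ≤ d) : Tendsto s atTop (𝓝 0) := by
  have hden : Tendsto (fun n : ℕ => (n : ℝ) + 1 - c) atTop atTop := by
    simpa only [add_sub_assoc] using
      tendsto_atTop_add_const_right _ (1 - c) tendsto_natCast_atTop_atTop
  refine tendsto_of_tendsto_of_tendsto_of_le_of_le' tendsto_const_nhds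
    ((tendsto_const_nhds (x := d)).div_atTop hden) (Eventually.of_forall hs) ?_
  filter_upwards [hden.eventually_gt_atTop 0] with n hn
  rw [le_div_iff₀ hn, mul_comm]
  exact h n

theorem EReal.exists_real_of_penalty_bounds {u v : EReal} {a c c' m r : ℝ} (hv : 0 ≤ v)
    (hc' : 0 < c') (hm : (m : EReal) < u - a + c * v) (hr : u - a + c' * v < r) :
    ∃ F s : ℝ, u = F ∧ v = s ∧ m < F - a + c * s ∧ F - a + c' * s < r := by
  induction u using EReal.rec <;> induction v using EReal.rec
  case coe.coe F s => exact ⟨F, s, rfl, rfl, by exact_mod_cast hm, by exact_mod_cast hr⟩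
  all_goals simp [← EReal.coe_sub, ← EReal.coe_mul, EReal.coe_mul_top_of_pos hc'] at hv hm hr

section Duality

variable {X H : Type*} [NormedAddCommGroup H] [InnerProductSpace ℝ H]
  {f : X → H → EReal} {σ : H → EReal} {A : H → H}

theorem dualq_le_MD {y : H} {c : ℝ} (hc : 0 ≤ c) : dualq f σ A y c ≤ MD f σ A :=
  le_iSup_of_le y <| le_iSup₂_of_le c hc le_rfl

theorem dualq_le_lagr (y : H) (c : ℝ) (x : X) (z : H) :
    dualq f σ A y c ≤ lagr f σ A y c x z :=
  iInf₂_le (f := lagr f σ A y c) x z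

theorem MD_le_MP {φ : X → EReal} (hdual : ∀ x, f x 0 = φ x) (hσ0 : σ 0 = 0)
    (hA0 : ∀ z, (‖A z‖ : EReal) ≤ σ z) : MD f σ A ≤ MP φ := by
  have hA : A 0 = 0 := norm_le_zero_iff.1 <| EReal.coe_le_coe_iff.1 <| (hA0 0).trans hσ0.le
  refine iSup_le fun y => iSup₂_le fun c _ => le_iInf fun x => ?_
  calc dualq f σ A y c ≤ lagr f σ A y c x 0 := dualq_le_lagr y c x 0
    _ = φ x := by simp [lagr, hdual, hA, hσ0]

theorem exists_seq_of_dualq_lt (hσpos : ∀ z, 0 ≤ σ z) (hA0 : ∀ z, (‖A z‖ : EReal) ≤ σ z)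
    {y : H} {c m r : ℝ} (hm : (m : EReal) < dualq f σ A y c)
    (hr : ∀ n : ℕ, dualq f σ A y (n + 1) < r) :
    ∃ (x : ℕ → X) (z : ℕ → H) (s : ℕ → ℝ), (∀ n, σ (z n) = s n) ∧ Tendsto s atTop (𝓝 0) ∧
      ∀ n, f (x n) (z n) ≤ ((r + s n * ‖y‖ : ℝ) : EReal) := by
  have hex : ∀ n : ℕ, ∃ (x : X) (z : H) (F s : ℝ), f x z = F ∧ σ z = s ∧
      m < F - inner ℝ (A z) y + c * s ∧ F - inner ℝ (A z) y + (n + 1) * s < r := by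
    intro n
    obtain ⟨x, z, hxz⟩ : ∃ x z, lagr f σ A y (n + 1) x z < r := by
      simpa only [dualq, iInf_lt_iff] using hr n
    exact ⟨x, z, EReal.exists_real_of_penalty_bounds (hσpos z) (by positivity)
      (hm.trans_le (dualq_le_lagr y c x z)) hxz⟩
  choose x z F s hF hs hmF hFr using hex
  have hs0 : ∀ n, 0 ≤ s n := fun n => EReal.coe_nonneg.1 (hs n ▸ hσpos (z n))
  have hAs : ∀ n, ‖A (z n)‖ ≤ s n := fun n => EReal.coe_le_coe_iff.1 (hs n ▸ hA0 (z n))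
  refine ⟨x, z, s, hs, tendsto_zero_of_penalty_le hs0 (c := c) (d := r - m) fun n => ?_,
    fun n => ?_⟩
  · linarith [hmF n, hFr n]
  · rw [hF n, EReal.coe_le_coe_iff]
    have hinner : inner ℝ (A (z n)) y ≤ s n * ‖y‖ :=
      (real_inner_le_norm _ _).trans (mul_le_mul_of_nonneg_right (hAs n) (norm_nonneg y))
    linarith [hFr n, mul_nonneg (n.cast_add_one_pos (α := ℝ)).le (hs0 n)]

end Duality

theorem strong_duality_general
    {X H : Type*} [NormedAddCommGroup X] [NormedSpace ℝ X]
    [NormedAddCommGroup H] [InnerProductSpace ℝ H] [CompleteSpace H]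
    (φ : X → EReal)
    (f : X → H → EReal)
    (hdual : ∀ x, f x 0 = φ x)
    (hflsc : WLsc2 fun p : X × H => f p.1 p.2)
    (hflev : WLevelCompact f)
    (σ : H → EReal)
    (hσpos : ∀ z, 0 ≤ σ z)
    (hσ0 : σ 0 = 0)
    (hσargmin : ∀ z, σ z = 0 → z = 0)
    (hσwlsc : WLsc σ)
    (A : H → H)
    (hA0 : ∀ z, (‖A z‖ : EReal) ≤ σ z)
    (Kσ : ℝ) (hKσpos : 0 < Kσ) (hσcc : IsBounded {z : H | σ z ≤ (Kσ : EReal)})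
    (ybar : H) (cbar : ℝ) (hqbar : dualq f σ A ybar cbar ≠ ⊥) :
    MP φ = MD f σ A := by
  refine le_antisymm ?_ (MD_le_MP hdual hσ0 hA0)
  by_contra! hgap
  obtain ⟨r, hMDr, hrMP⟩ := EReal.exists_between_coe_real hgap
  obtain ⟨m, -, hm⟩ := EReal.exists_between_coe_real hqbar.bot_lt
  obtain ⟨x, z, s, hσs, hs, hf⟩ := exists_seq_of_dualq_lt hσpos hA0 hm
    fun n => (dualq_le_MD (by positivity)).trans_lt hMDr
  have hσz : Tendsto (fun n => σ (z n)) atTop (𝓝 0) := by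
    simpa only [hσs, EReal.coe_zero] using EReal.tendsto_coe.2 hs
  have hbound : Tendsto (fun n => ((r + s n * ‖ybar‖ : ℝ) : EReal)) atTop (𝓝 r) :=
    EReal.tendsto_coe.2 (by simpa using (hs.mul_const ‖ybar‖).const_add r)
  obtain ⟨U, hU, hU0, B, hB, hUB⟩ := hflev 0 (r + 1)
  obtain ⟨x₀, hx₀⟩ := hflsc.exists_le_of_levelCompact (u := fun n => toWeakSpace ℝ X (x n))
    (EReal.coe_lt_coe_iff.2 (lt_add_one r)) (hU.mem_nhds hU0) hB (fun z hz _ hy => hUB z hz hy)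
    (tendsto_weakSpace_zero_of_tendsto_sigma hσpos hσargmin hσwlsc hKσpos hσcc hσz) hbound
    (Eventually.of_forall hf)
  exact hrMP.not_ge ((iInf_le φ x₀).trans (hdual x₀ ▸ hx₀))

/-- Strong duality: under (H0)–(H2), (A0), (A1), with a conditionally
coercive augmenting function and a point where the dual function is above `−∞`, the
zero-duality-gap property `M_P = M_D` holds. -/
theorem strong_duality
    {X H : Type*} [NormedAddCommGroup X] [NormedSpace ℝ X] [CompleteSpace X]
    [NormedAddCommGroup H] [InnerProductSpace ℝ H] [CompleteSpace H]
    (hrefl : IsReflexiveSpace X)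
    (φ : X → EReal)
    (hφproper : (∀ x, φ x ≠ ⊥) ∧ (∃ x, φ x ≠ ⊤))
    (hφwlsc : WLsc φ)
    (hφlev : ∀ α : ℝ, WCompact {x : X | φ x ≤ (α : EReal)})
    (f : X → H → EReal)
    (hdual : ∀ x, f x 0 = φ x)
    (hfproper : (∀ x z, f x z ≠ ⊥) ∧ (∃ x z, f x z ≠ ⊤))
    (hflsc : WLsc2 fun p : X × H => f p.1 p.2)
    (hflev : WLevelCompact f)
    (σ : H → EReal)
    (hσpos : ∀ z, 0 ≤ σ z)
    (hσ0 : σ 0 = 0)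
    (hσargmin : ∀ z, σ z = 0 → z = 0)
    (hσwlsc : WLsc σ)
    (A : H → H)
    (hA0 : ∀ z, (‖A z‖ : EReal) ≤ σ z)
    (hA1 : ∀ y : H, WUsc fun z => (inner ℝ (A z) y : ℝ))
    (Kσ : ℝ) (hKσpos : 0 < Kσ) (hσcc : IsBounded {z : H | σ z ≤ (Kσ : EReal)})
    (ybar : H) (cbar : ℝ) (hcbar : 0 ≤ cbar) (hqbar : dualq f σ A ybar cbar ≠ ⊥) :
    MP φ = MD f σ A :=
  strong_duality_general φ f hdual hflsc hflev σ hσpos hσ0 hσargmin hσwlsc A hA0 Kσ hKσpos hσcc ybar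
    cbar hqbar
end
end

section
/- Assume (H0)–(H2), (A0), (A1), strong duality M_P = M_D, and that σ is conditionally coercive with constant K_σ. Let (ŷ,ĉ) satisfy q(ŷ,ĉ) > −∞ and s ≥ M_P. If the exact DSG algorithm (r_k = 0 for all k) is started at y₀ := ŷ and c₀ > ĉ + (s − q(ŷ,ĉ))/K_σ, then for every k ≥ 0 the set X(y_k,c_k) := {(x,z) ∈ X × H : f(x,z) − ⟨A(z),y_k⟩ + c_k σ(z) = q(y_k,c_k)} is nonempty; that is, the exact DSG algorithm is well defined and q(y_k,c_k) ∈ ℝ is attained at each iteration. -/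
open Filter Topology Bornology

noncomputable section

/-!
Along the iteration the quantity `c_k - ‖y_k - ŷ‖` never decreases: `c` grows by
`(α_k + 1) s_k σ(z_k)` while `y` moves by `s_k ‖A z_k‖ ≤ s_k σ(z_k)`. Hence
`δ := c_k - ĉ - ‖y_k - ŷ‖ > (s - q(ŷ,ĉ)) / K_σ`, and for the Lagrangian
`L(y,c)(x,z) = f(x,z) - ⟨A z, y⟩ + c σ(z)` Cauchy–Schwarz turns `q(ŷ,ĉ) ≤ L(ŷ,ĉ)(x,z)` into
`q(ŷ,ĉ) + δ σ(z) ≤ L(y_k,c_k)(x,z)`. So `q(y_k,c_k)` lies between `q(ŷ,ĉ)` and `M_D = M_P ≤ s`,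
and on the sublevel set `{L(y_k,c_k) ≤ q(ŷ,ĉ) + δ K_σ}`, which is nonempty because
`s < q(ŷ,ĉ) + δ K_σ`, we have `σ(z) ≤ K_σ`. That bounds `z` in a weakly compact ball and, by the
level-compactness of `f`, confines `x` to a weakly compact set; the weakly lsc Lagrangian attains
its minimum on this compact sublevel set.
-/

theorem EReal.le_of_coe_add_coe_mul_le {q δ K : ℝ} (hδ : 0 < δ) {v : EReal}
    (h : (q : EReal) + δ * v ≤ ((q + δ * K : ℝ) : EReal)) : v ≤ K := by
  induction v using EReal.rec with
  | bot => exact bot_le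
  | top =>
    rw [EReal.coe_mul_top_of_pos hδ, EReal.coe_add_top] at h
    exact absurd h (not_le.2 (EReal.coe_lt_top _))
  | coe v =>
    norm_cast at h ⊢
    nlinarith

theorem LowerSemicontinuous.exists_forall_le_of_isCompact_setOf_le {α β : Type*}
    [TopologicalSpace α] [LinearOrder β] {g : α → β} (hg : LowerSemicontinuous g) {t : β}
    (hS : IsCompact {p | g p ≤ t}) (hne : ∃ p, g p ≤ t) : ∃ p, ∀ p', g p ≤ g p' := by
  obtain ⟨p, hpS, hpmin⟩ := (hg.lowerSemicontinuousOn _).exists_isMinOn hne hS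
  refine ⟨p, fun p' => ?_⟩
  rcases le_or_gt (g p') t with hp' | hp'
  · exact hpmin hp'
  · exact (show g p ≤ t from hpS).trans hp'.le

-- Banach–Alaoglu, transported to `H` through the Riesz isomorphism.
theorem wCompact_closedBall {H : Type*} [NormedAddCommGroup H] [InnerProductSpace ℝ H]
    [CompleteSpace H] (x : H) (r : ℝ) : WCompact (Metric.closedBall x r) := by
  let D := (InnerProductSpace.toDual ℝ H).symm
  let g : WeakDual ℝ H → WeakSpace ℝ H := D ∘ WeakDual.toStrongDual
  have hg : Continuous g := by
    refine WeakBilin.continuous_of_continuous_eval _ fun L => ?_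
    convert WeakDual.eval_continuous (D L) using 2 with φ
    show L (D (WeakDual.toStrongDual φ)) = WeakDual.toStrongDual φ (D L)
    rw [← InnerProductSpace.toDual_symm_apply (y := L),
      ← InnerProductSpace.toDual_symm_apply (y := WeakDual.toStrongDual φ), real_inner_comm]
  have himg : (⇑D ∘ ⇑WeakDual.toStrongDual) ''
      (WeakDual.toStrongDual ⁻¹' Metric.closedBall (D.symm x) r) = Metric.closedBall x r := by
    rw [Set.image_comp, Set.image_preimage_eq _ WeakDual.toStrongDual.surjective,
      D.image_closedBall, D.apply_symm_apply]
  unfold WCompact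
  rw [← himg]
  exact (WeakDual.isCompact_closedBall (D.symm x) r).image hg

theorem WLevelCompact.exists_wCompact {X H : Type*} [NormedAddCommGroup X] [NormedSpace ℝ X]
    [NormedAddCommGroup H] [NormedSpace ℝ H] {f : X → H → EReal} (hf : WLevelCompact f)
    {K : Set H} (hK : WCompact K) (α : ℝ) :
    ∃ B : Set X, WCompact B ∧ ∀ z ∈ K, {x | f x z ≤ α} ⊆ B := by
  choose U hU hzU B hB hUB using fun z₀ => hf z₀ α
  obtain ⟨t, ht⟩ := hK.elim_finite_subcover (fun z₀ => (show Set (WeakSpace ℝ H) from U z₀)) hU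
    fun z _ => Set.mem_iUnion.2 ⟨z, hzU z⟩
  refine ⟨⋃ ζ ∈ t, B ζ, t.isCompact_biUnion fun ζ _ => hB ζ, fun z hz x hx => ?_⟩
  obtain ⟨ζ, hζ, hzζ⟩ := Set.mem_iUnion₂.1 (ht hz)
  exact Set.mem_iUnion₂.2 ⟨ζ, hζ, hUB ζ z hzζ hx⟩

namespace DSG

theorem add_norm_sub_le_of_step {H : Type*} [NormedAddCommGroup H] [NormedSpace ℝ H]
    {y g : ℕ → H} {c st a w : ℕ → ℝ}
    (hy : ∀ k, y (k + 1) = y k - st k • g k)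
    (hc : ∀ k, c (k + 1) = c k + (a k + 1) * st k * w k)
    (hg : ∀ k, ‖g k‖ ≤ w k) (ha : ∀ k, 0 ≤ a k) (hst : ∀ k, 0 ≤ st k) :
    ∀ k, c 0 + ‖y k - y 0‖ ≤ c k
  | 0 => by simp
  | k + 1 => by
    have hstep : ‖y (k + 1) - y 0‖ ≤ ‖y k - y 0‖ + st k * ‖g k‖ := by
      rw [hy, sub_right_comm]
      exact (norm_sub_le _ _).trans_eq (by rw [norm_smul, Real.norm_of_nonneg (hst k)])
    have hgw := mul_le_mul_of_nonneg_left (hg k) (hst k)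
    have hpos := mul_nonneg (mul_nonneg (ha k) (hst k)) ((norm_nonneg _).trans (hg k))
    have := add_norm_sub_le_of_step hy hc hg ha hst k
    rw [hc]
    nlinarith

variable {X H : Type*} [NormedAddCommGroup H] [InnerProductSpace ℝ H]
  {f : X → H → EReal} {σ : H → EReal} {A : H → H} {y : H} {c : ℝ}

theorem dualq_le_lagr (x : X) (z : H) : dualq f σ A y c ≤ lagr f σ A y c x z :=
  iInf₂_le (f := fun x z => lagr f σ A y c x z) x z

theorem dualq_le_MD (hc : 0 ≤ c) : dualq f σ A y c ≤ MD f σ A :=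
  le_iSup₂_of_le y c (le_iSup_of_le hc le_rfl)

theorem f_le_of_lagr_le {x : X} {z : H} {t K : ℝ} (hc : 0 ≤ c) (hA : (‖A z‖ : EReal) ≤ σ z)
    (hσK : σ z ≤ K) (hL : lagr f σ A y c x z ≤ t) : f x z ≤ ((t + K * ‖y‖ : ℝ) : EReal) := by
  unfold lagr at hL
  generalize f x z = u at *
  generalize σ z = v at *
  induction v using EReal.rec with
  | bot => exact absurd hA (not_le.2 (EReal.bot_lt_coe _))
  | top => exact absurd hσK (not_le.2 (EReal.coe_lt_top _))
  | coe v =>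
    induction u using EReal.rec with
    | bot => exact bot_le
    | top =>
      simp only [EReal.top_sub_coe, ← EReal.coe_mul, EReal.top_add_coe, top_le_iff] at hL
      exact absurd hL (EReal.coe_ne_top _)
    | coe u =>
      have hAv : ‖A z‖ ≤ v := by exact_mod_cast hA
      have hvK : v ≤ K := by exact_mod_cast hσK
      have hCS := real_inner_le_norm (A z) y
      have := mul_le_mul_of_nonneg_right (hAv.trans hvK) (norm_nonneg y)
      norm_cast at hL ⊢
      nlinarith [mul_nonneg hc ((norm_nonneg _).trans hAv)]

theorem lagr_add_mul_le {y' : H} {d : ℝ} (hc : 0 ≤ c) (hd : 0 < d) {x : X} {z : H}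
    (hf : f x z ≠ ⊥) (hA : (‖A z‖ : EReal) ≤ σ z) :
    lagr f σ A y c x z + d * σ z ≤ lagr f σ A y' (c + d + ‖y' - y‖) x z := by
  unfold lagr
  generalize f x z = u at *
  generalize σ z = v at *
  induction v using EReal.rec with
  | bot => exact absurd hA (not_le.2 (EReal.bot_lt_coe _))
  | top =>
    have hpos : 0 < c + d + ‖y' - y‖ := by linarith [norm_nonneg (y' - y)]
    rw [EReal.coe_mul_top_of_pos hpos, EReal.add_top_of_ne_bot]
    · exact le_top
    · rw [sub_eq_add_neg, ← EReal.coe_neg]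
      exact EReal.add_ne_bot_iff.2 ⟨hf, EReal.coe_ne_bot _⟩
  | coe v =>
    induction u using EReal.rec with
    | bot => exact absurd rfl hf
    | top => simp only [EReal.top_sub_coe, ← EReal.coe_mul, EReal.top_add_coe, le_top]
    | coe u =>
      have hAv : ‖A z‖ * ‖y' - y‖ ≤ v * ‖y' - y‖ :=
        mul_le_mul_of_nonneg_right (by exact_mod_cast hA) (norm_nonneg _)
      have hCS : (inner ℝ (A z) y' : ℝ) - inner ℝ (A z) y ≤ ‖A z‖ * ‖y' - y‖ :=
        (inner_sub_right (𝕜 := ℝ) (A z) y' y).symm ▸ real_inner_le_norm _ _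
      norm_cast
      nlinarith

variable [NormedAddCommGroup X] [NormedSpace ℝ X]

theorem wLsc2_lagr (hflsc : WLsc2 fun p : X × H => f p.1 p.2) (hf : ∀ x z, f x z ≠ ⊥)
    (hσ : WLsc σ) (hσpos : ∀ z, 0 ≤ σ z) (hA : WUsc fun z => (inner ℝ (A z) y : ℝ))
    (hc : 0 ≤ c) : WLsc2 fun p : X × H => lagr f σ A y c p.1 p.2 := by
  have hinner : LowerSemicontinuous fun z : WeakSpace ℝ H => -((inner ℝ (A z) y : ℝ) : EReal) :=
    (continuous_neg.comp continuous_coe_real_ereal).comp_upperSemicontinuous_antitone hA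
      fun _ _ h => EReal.neg_le_neg_iff.2 (EReal.coe_le_coe_iff.2 h)
  have hmul : LowerSemicontinuous fun z : WeakSpace ℝ H => (c : EReal) * σ z :=
    (continuous_iff_continuousAt.2 fun _ => (EReal.Tendsto.const_mul tendsto_id
      (Or.inl (EReal.coe_ne_bot c)) (Or.inl (EReal.coe_ne_top c)))).comp_lowerSemicontinuous hσ
      fun _ _ h => mul_le_mul_of_nonneg_left h (EReal.coe_nonneg.2 hc)
  have hinner₂ : LowerSemicontinuous fun p : WeakSpace ℝ X × WeakSpace ℝ H =>
      -((inner ℝ (A p.2) y : ℝ) : EReal) := hinner.comp continuous_snd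
  have hmul₂ : LowerSemicontinuous fun p : WeakSpace ℝ X × WeakSpace ℝ H =>
      (c : EReal) * σ p.2 := hmul.comp continuous_snd
  refine (hflsc.add' hinner₂ fun p => ?_).add' hmul₂ fun p => ?_
  · exact EReal.continuousAt_add (Or.inr (by simp)) (Or.inl (hf p.1 p.2))
  · refine EReal.continuousAt_add (Or.inr ?_) (Or.inl ?_)
    · exact ne_bot_of_le_ne_bot (by simp) (mul_nonneg (EReal.coe_nonneg.2 hc) (hσpos p.2))
    · exact EReal.add_ne_bot_iff.2 ⟨hf p.1 p.2, by simp⟩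

theorem exists_lagr_eq_dualq [CompleteSpace H] (hflsc : WLsc2 fun p : X × H => f p.1 p.2)
    (hflev : WLevelCompact f) (hf : ∀ x z, f x z ≠ ⊥) (hσ : WLsc σ) (hσpos : ∀ z, 0 ≤ σ z)
    (hA0 : ∀ z, (‖A z‖ : EReal) ≤ σ z) (hA1 : WUsc fun z => (inner ℝ (A z) y : ℝ))
    {K : ℝ} (hσK : Bornology.IsBounded {z : H | σ z ≤ K}) (hc : 0 ≤ c) {q δ : ℝ} (hδ : 0 < δ)
    (hlow : ∀ x z, q + δ * σ z ≤ lagr f σ A y c x z)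
    (hq : dualq f σ A y c < ((q + δ * K : ℝ) : EReal)) :
    ∃ x z, lagr f σ A y c x z = dualq f σ A y c := by
  set t := q + δ * K
  let L : WeakSpace ℝ X × WeakSpace ℝ H → EReal := fun p => lagr f σ A y c p.1 p.2
  have hL : LowerSemicontinuous L := wLsc2_lagr hflsc hf hσ hσpos hA1 hc
  have hσS : ∀ x z, lagr f σ A y c x z ≤ t → σ z ≤ K := fun x z hxz =>
    EReal.le_of_coe_add_coe_mul_le hδ ((hlow x z).trans hxz)
  obtain ⟨R, hR⟩ := hσK.subset_closedBall 0
  obtain ⟨B, hB, hfB⟩ := hflev.exists_wCompact (wCompact_closedBall (0 : H) R) (t + K * ‖y‖)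
  have hsub : ∀ x z, lagr f σ A y c x z ≤ t → x ∈ B ∧ z ∈ Metric.closedBall 0 R :=
    fun x z hxz => ⟨hfB z (hR (hσS x z hxz)) (f_le_of_lagr_le hc (hA0 z) (hσS x z hxz) hxz),
      hR (hσS x z hxz)⟩
  have hS : IsCompact {p | L p ≤ t} :=
    (hB.prod (wCompact_closedBall (0 : H) R)).of_isClosed_subset (hL.isClosed_preimage t)
      fun p hp => hsub p.1 p.2 hp
  have hne : ∃ p, L p ≤ t := by
    obtain ⟨x, hx⟩ := iInf_lt_iff.1 hq
    obtain ⟨z, hz⟩ := iInf_lt_iff.1 hx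
    exact ⟨(x, z), hz.le⟩
  obtain ⟨p, hp⟩ := hL.exists_forall_le_of_isCompact_setOf_le hS hne
  exact ⟨p.1, p.2, le_antisymm (le_iInf₂ fun x z => hp (x, z)) (dualq_le_lagr _ _)⟩

end DSG

theorem exact_dsg_well_defined_general
    {X H : Type*} [NormedAddCommGroup X] [NormedSpace ℝ X]
    [NormedAddCommGroup H] [InnerProductSpace ℝ H] [CompleteSpace H]
    (φ : X → EReal)
    (f : X → H → EReal)
    (hfproper : (∀ x z, f x z ≠ ⊥) ∧ (∃ x z, f x z ≠ ⊤))
    (hflsc : WLsc2 fun p : X × H => f p.1 p.2)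
    (hflev : WLevelCompact f)
    (σ : H → EReal)
    (hσpos : ∀ z, 0 ≤ σ z)
    (hσwlsc : WLsc σ)
    (A : H → H)
    (hA0 : ∀ z, (‖A z‖ : EReal) ≤ σ z)
    (hA1 : ∀ y : H, WUsc fun z => (inner ℝ (A z) y : ℝ))
    (Kσ : ℝ) (hKσpos : 0 < Kσ) (hσcc : IsBounded {z : H | σ z ≤ (Kσ : EReal)})
    (hSD : MP φ = MD f σ A)
    (yh : H) (ch : ℝ) (hch : 0 ≤ ch)
    (qh : ℝ) (hqh : dualq f σ A yh ch = (qh : EReal))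
    (s : ℝ) (hs : MP φ ≤ (s : EReal))
    (x : ℕ → X) (z y : ℕ → H) (c st a σz : ℕ → ℝ)
    (hσz : ∀ k, (σz k : EReal) = σ (z k))
    (abar : ℝ) (ha : ∀ k, 0 < a k ∧ a k < abar)
    (hst : ∀ k, 0 < st k)
    (hy0 : y 0 = yh) (hc0 : ch + (s - qh) / Kσ < c 0)
    (hy : ∀ k, y (k + 1) = y k - st k • A (z k))
    (hc : ∀ k, c (k + 1) = c k + (a k + 1) * st k * σz k) :
    ∀ k : ℕ,
      (∀ j < k, lagr f σ A (y j) (c j) (x j) (z j) = dualq f σ A (y j) (c j)) →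
      (∃ qk : ℝ, dualq f σ A (y k) (c k) = (qk : EReal)) ∧
        ∃ (x' : X) (z' : H),
          lagr f σ A (y k) (c k) x' z' = dualq f σ A (y k) (c k) := by
  intro k _
  have hinv : c 0 + ‖y k - yh‖ ≤ c k := hy0 ▸ DSG.add_norm_sub_le_of_step hy hc
    (fun j => EReal.coe_le_coe_iff.1 (hσz j ▸ hA0 (z j))) (fun j => (ha j).1.le)
    (fun j => (hst j).le) k
  have hq_le_s : ∀ y' c', 0 ≤ c' → dualq f σ A y' c' ≤ s := fun _ _ hc' =>
    (DSG.dualq_le_MD hc').trans (hSD ▸ hs)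
  have hqh_le_s : qh ≤ s := EReal.coe_le_coe_iff.1 (hqh ▸ hq_le_s yh ch hch)
  set δ := c k - ch - ‖y k - yh‖
  have hδ : s < qh + δ * Kσ := by
    have := (div_lt_iff₀ hKσpos).1 (show (s - qh) / Kσ < δ by linarith)
    linarith
  have hδpos : 0 < δ := by nlinarith
  have hlow : ∀ x' z', (qh : EReal) + δ * σ z' ≤ lagr f σ A (y k) (c k) x' z' := fun x' z' => by
    have hshift :=
      DSG.lagr_add_mul_le (y := yh) (y' := y k) hch hδpos (hfproper.1 x' z') (hA0 z')
    rw [show ch + δ + ‖y k - yh‖ = c k by ring] at hshift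
    exact (add_le_add (hqh ▸ DSG.dualq_le_lagr x' z') le_rfl).trans hshift
  have hqk_ge : (qh : EReal) ≤ dualq f σ A (y k) (c k) := le_iInf₂ fun x' z' =>
    (le_add_of_nonneg_right (mul_nonneg (EReal.coe_nonneg.2 hδpos.le) (hσpos z'))).trans
      (hlow x' z')
  have hqk_le : dualq f σ A (y k) (c k) ≤ s := hq_le_s _ _ (by linarith [norm_nonneg (y k - yh)])
  refine ⟨⟨_, (EReal.coe_toReal (hqk_le.trans_lt (EReal.coe_lt_top s)).ne
    ((EReal.bot_lt_coe qh).trans_le hqk_ge).ne').symm⟩, ?_⟩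
  exact DSG.exists_lagr_eq_dualq hflsc hflev hfproper.1 hσwlsc hσpos hA0 (hA1 (y k)) hσcc
    (by linarith [norm_nonneg (y k - yh)]) hδpos hlow (hqk_le.trans_lt (by exact_mod_cast hδ))

/-- Well-definedness of the exact DSG algorithm for a conditionally
coercive `σ`: starting from `y₀ = ŷ` and `c₀ > ĉ + (s − q(ŷ,ĉ))/K_σ`, if the Lagrangian
infimum was attained at every previous iteration, then at the current iteration the value
`q(y_k,c_k)` is finite and the infimum defining it is attained. -/
theorem exact_dsg_well_defined
    {X H : Type*} [NormedAddCommGroup X] [NormedSpace ℝ X] [CompleteSpace X]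
    [NormedAddCommGroup H] [InnerProductSpace ℝ H] [CompleteSpace H]
    (hrefl : IsReflexiveSpace X)
    (φ : X → EReal)
    (hφproper : (∀ x, φ x ≠ ⊥) ∧ (∃ x, φ x ≠ ⊤))
    (hφwlsc : WLsc φ)
    (hφlev : ∀ α : ℝ, WCompact {x : X | φ x ≤ (α : EReal)})
    (f : X → H → EReal)
    (hdual : ∀ x, f x 0 = φ x)
    (hfproper : (∀ x z, f x z ≠ ⊥) ∧ (∃ x z, f x z ≠ ⊤))
    (hflsc : WLsc2 fun p : X × H => f p.1 p.2)
    (hflev : WLevelCompact f)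
    (σ : H → EReal)
    (hσpos : ∀ z, 0 ≤ σ z)
    (hσ0 : σ 0 = 0)
    (hσargmin : ∀ z, σ z = 0 → z = 0)
    (hσwlsc : WLsc σ)
    (A : H → H)
    (hA0 : ∀ z, (‖A z‖ : EReal) ≤ σ z)
    (hA1 : ∀ y : H, WUsc fun z => (inner ℝ (A z) y : ℝ))
    (Kσ : ℝ) (hKσpos : 0 < Kσ) (hσcc : IsBounded {z : H | σ z ≤ (Kσ : EReal)})
    (hSD : MP φ = MD f σ A)
    (yh : H) (ch : ℝ) (hch : 0 ≤ ch)
    (qh : ℝ) (hqh : dualq f σ A yh ch = (qh : EReal))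
    (s : ℝ) (hs : MP φ ≤ (s : EReal))
    (x : ℕ → X) (z y : ℕ → H) (c st a σz : ℕ → ℝ)
    (hσz : ∀ k, (σz k : EReal) = σ (z k))
    (abar : ℝ) (habar : 0 < abar) (ha : ∀ k, 0 < a k ∧ a k < abar)
    (hst : ∀ k, 0 < st k)
    (hy0 : y 0 = yh) (hc0 : ch + (s - qh) / Kσ < c 0)
    (hy : ∀ k, y (k + 1) = y k - st k • A (z k))
    (hc : ∀ k, c (k + 1) = c k + (a k + 1) * st k * σz k) :
    ∀ k : ℕ,
      (∀ j < k, lagr f σ A (y j) (c j) (x j) (z j) = dualq f σ A (y j) (c j)) →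
      (∃ qk : ℝ, dualq f σ A (y k) (c k) = (qk : EReal)) ∧
        ∃ (x' : X) (z' : H),
          lagr f σ A (y k) (c k) x' z' = dualq f σ A (y k) (c k) :=
  exact_dsg_well_defined_general φ f hfproper hflsc hflev σ hσpos hσwlsc A hA0 hA1 Kσ hKσpos hσcc
    hSD yh ch hch qh hqh s hs x z y c st a σz hσz abar ha hst hy0 hc0 hy hc
end
end
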